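/- Let V be a 3-dimensional real vector space with a nondegenerate symmetric bilinear form g, v ∈ V with ⟨v,v⟩ ≠ 0, q ≠ 0, Λ ∈ ℝ, and define G(a,b) = q(⟨v,a⟩⟨v,b⟩ - (1/2)⟨v,v⟩ g(a,b)) - Λ g(a,b). Let B = (1/2)·((1/3)G₁G₂ - G₃)/(G₂ - (1/3)G₁²) with G₁, G₂, G₃ the traces of the first three powers of the g-raised endomorphism of G, and define H(a,b) = G(a,b) - (G₁ + 2B) g(a,b). Then H(a,b) = q ⟨v,a⟩⟨v,b⟩ for all a, b ∈ V. -/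

import Mathlib

open Matrix

/-!
Raising an index with `g⁻¹` turns `G` into `M = q • (v ⊗ gv) - μ • 1` with `μ = q s / 2 + Λ`,
`s = ⟨v,v⟩`. The rank-one part `P = v ⊗ gv` satisfies `P² = s • P` and `tr P = s`, so `M` behaves
like a diagonal matrix with eigenvalues `x = q s - μ` (once) and `y = -μ` (twice): `tr Mᵏ = xᵏ + 2 yᵏ`.
Rainich's scalar `B` is a rational function of these power traces and, as long as `x ≠ y`
(i.e. `q s ≠ 0`), satisfies `G₁ + 2 B = y = -μ`; then `H = G + μ g = q (gv) ⊗ (gv)`.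
-/

section RankOne

variable {n R : Type*} [Fintype n] [CommRing R]

lemma vecMulVec_mul_self (u w : n → R) :
    vecMulVec u w * vecMulVec u w = (u ⬝ᵥ w) • vecMulVec u w := by
  rw [vecMulVec_mul_vecMulVec, vecMulVec_smul, dotProduct_comm]

variable [DecidableEq n]

lemma exists_pow_smul_add_smul_one {P : Matrix n n R} {s : R} (hP : P * P = s • P)
    (a d : R) (k : ℕ) :
    ∃ c : R, (a • P + d • 1) ^ k = c • P + d ^ k • 1 ∧ c * s = (a * s + d) ^ k - d ^ k := by
  induction k with
  | zero => exact ⟨0, by simp, by simp⟩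
  | succ k ih =>
    obtain ⟨c, hpow, hc⟩ := ih
    refine ⟨c * (a * s + d) + a * d ^ k, ?_, by linear_combination (a * s + d) * hc⟩
    rw [pow_succ, hpow]
    simp only [add_mul, mul_add, smul_mul_smul, hP, mul_one, one_mul, smul_smul]
    module

lemma trace_pow_smul_add_smul_one {P : Matrix n n R} {s : R} (hP : P * P = s • P)
    (htr : P.trace = s) (a d : R) (k : ℕ) :
    ((a • P + d • 1) ^ k).trace = (a * s + d) ^ k + (Fintype.card n - 1 : R) * d ^ k := by
  obtain ⟨c, hpow, hc⟩ := exists_pow_smul_add_smul_one hP a d k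
  rw [hpow, trace_add, trace_smul, trace_smul, htr, trace_one, smul_eq_mul, smul_eq_mul, hc]
  ring

end RankOne

/-- The scalar `B` of the statement, in terms of `tᵢ = tr (g⁻¹ G)ⁱ`. -/
def rainichScalar {K : Type*} [Field K] (t₁ t₂ t₃ : K) : K :=
  (1/2) * ((1/3) * t₁ * t₂ - t₃) / (t₂ - (1/3) * t₁ ^ 2)

lemma add_two_mul_rainichScalar {K : Type*} [Field K] [CharZero K] {x y : K} (hxy : x ≠ y) :
    (x + 2 * y) + 2 * rainichScalar (x + 2 * y) (x ^ 2 + 2 * y ^ 2) (x ^ 3 + 2 * y ^ 3) = y := by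
  have hden : x ^ 2 + 2 * y ^ 2 - (1/3) * (x + 2 * y) ^ 2 = (2/3) * (x - y) ^ 2 := by ring
  have hne : x - y ≠ 0 := sub_ne_zero.mpr hxy
  rw [rainichScalar, hden]
  field_simp
  ring

theorem stmt2_general (g G : Matrix (Fin 3) (Fin 3) ℝ) (hdet : IsUnit g.det)
    (v : Fin 3 → ℝ) (q Λ : ℝ) (hv : v ⬝ᵥ (g *ᵥ v) ≠ 0) (hq : q ≠ 0)
    (hG : ∀ a b, G a b =
      q * ((g *ᵥ v) a * (g *ᵥ v) b - (1/2) * (v ⬝ᵥ (g *ᵥ v)) * g a b) - Λ * g a b)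
    (B : ℝ)
    (hB : B = (1/2) * ((1/3) * (g⁻¹ * G).trace * ((g⁻¹ * G) ^ 2).trace
        - ((g⁻¹ * G) ^ 3).trace) /
      (((g⁻¹ * G) ^ 2).trace - (1/3) * ((g⁻¹ * G).trace) ^ 2)) :
    ∀ a b, G a b - ((g⁻¹ * G).trace + 2 * B) * g a b
      = q * (g *ᵥ v) a * (g *ᵥ v) b := by
  set w := g *ᵥ v
  set s := v ⬝ᵥ w
  set μ := q * (1/2) * s + Λ
  have hGmat : G = q • vecMulVec w w + (-μ) • g := by
    ext a b
    simp only [hG, Matrix.add_apply, Matrix.smul_apply, vecMulVec_apply, smul_eq_mul, μ]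
    ring
  have hM : g⁻¹ * G = q • vecMulVec v w + (-μ) • 1 := by
    rw [hGmat, Matrix.mul_add, Matrix.mul_smul, Matrix.mul_smul, mul_vecMulVec, mulVec_mulVec,
      nonsing_inv_mul g hdet, one_mulVec]
  have htr : ∀ k, ((g⁻¹ * G) ^ k).trace = (q * s - μ) ^ k + 2 * (-μ) ^ k := by
    intro k
    rw [hM, trace_pow_smul_add_smul_one (vecMulVec_mul_self v w) (trace_vecMulVec v w),
      Fintype.card_fin]
    ring
  have hxy : q * s - μ ≠ -μ := fun h => mul_ne_zero hq hv (by linarith)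
  have hkey : (g⁻¹ * G).trace + 2 * B = -μ := by
    have htr₁ : (g⁻¹ * G).trace = (q * s - μ) + 2 * (-μ) := by simpa using htr 1
    rw [hB, htr₁, htr 2, htr 3]
    exact add_two_mul_rainichScalar hxy
  intro a b
  rw [hkey, hG]
  ring

/-- With `G` as in the non-null Einstein–Maxwell equations,
`B` the Rainich scalar and `H(a,b) = G(a,b) - (G₁ + 2B) g(a,b)`, one recovers the
rank-one piece: `H(a,b) = q ⟨v,a⟩⟨v,b⟩`. -/
theorem stmt2 (g G : Matrix (Fin 3) (Fin 3) ℝ) (hg : g.IsSymm) (hdet : IsUnit g.det)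
    (v : Fin 3 → ℝ) (q Λ : ℝ) (hv : v ⬝ᵥ (g *ᵥ v) ≠ 0) (hq : q ≠ 0)
    (hG : ∀ a b, G a b =
      q * ((g *ᵥ v) a * (g *ᵥ v) b - (1/2) * (v ⬝ᵥ (g *ᵥ v)) * g a b) - Λ * g a b)
    (B : ℝ)
    (hB : B = (1/2) * ((1/3) * (g⁻¹ * G).trace * ((g⁻¹ * G) ^ 2).trace
        - ((g⁻¹ * G) ^ 3).trace) /
      (((g⁻¹ * G) ^ 2).trace - (1/3) * ((g⁻¹ * G).trace) ^ 2)) :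
    ∀ a b, G a b - ((g⁻¹ * G).trace + 2 * B) * g a b
      = q * (g *ᵥ v) a * (g *ᵥ v) b :=
  stmt2_general g G hdet v q Λ hv hq hG B hB
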